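/- With f the unique càdlàg solution of f(t) = a₀ + Σ_{(x,y)∈Π} 1_{(t₀,t]}(x) y^⟨−1/α(f(x₋))⟩, for any t₀ ≤ s < t < t₁ the value f(t) is completely determined by f(s) and the points of Π ∩ ((s,t] × ℝ): that is, f restricted to [s,t] is the unique càdlàg solution of g(t') = f(s) + Σ_{(x,y)∈Π} 1_{(s,t']}(x) y^⟨−1/α(g(x₋))⟩ for t' ∈ [s,t]. -/

import Mathlib

open MeasureTheory Filter Set

noncomputable def spow (r s : ℝ) : ℝ := Real.sign r * |r| ^ s

noncomputable def wab (a b y : ℝ) : ℝ :=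
  max (|y| ^ (-1 / a) * (1 + abs (Real.log (abs y)))) (|y| ^ (-1 / b) * (1 + abs (Real.log (abs y))))

noncomputable def Mconst (α : ℝ → ℝ) : ℝ := ⨆ ξ : ℝ, |deriv α ξ| / (α ξ) ^ 2

/-- Càdlàg on `[t₀,t₁)`: right-continuous on `[t₀,t₁)` and left limits exist on `(t₀,t₁]`. -/
def CadlagOn (f : ℝ → ℝ) (t₀ t₁ : ℝ) : Prop :=
  (∀ u ∈ Set.Ico t₀ t₁, Filter.Tendsto f (nhdsWithin u (Set.Ioi u)) (nhds (f u))) ∧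
  (∀ u ∈ Set.Ioc t₀ t₁, ∃ L, Filter.Tendsto f (nhdsWithin u (Set.Iio u)) (nhds L))

/-- The sum `∑_{(x,y)∈Λ} 1_{(t₀,t]}(x) y^⟨-1/α(f(x₋))⟩`. -/
noncomputable def jumpSum (α : ℝ → ℝ) (Λ : Set (ℝ × ℝ)) (t₀ t : ℝ) (f : ℝ → ℝ) : ℝ :=
  ∑' p : Λ, if (p : ℝ × ℝ).1 ∈ Set.Ioc t₀ t
    then spow (p : ℝ × ℝ).2 (-1 / α (Function.leftLim f (p : ℝ × ℝ).1)) else 0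

/-- The truncated sum over points with `|y| ≤ n`. -/
noncomputable def jumpSumTrunc (α : ℝ → ℝ) (Λ : Set (ℝ × ℝ)) (n : ℝ) (t₀ t : ℝ) (f : ℝ → ℝ) : ℝ :=
  ∑' p : Λ, if |(p : ℝ × ℝ).2| ≤ n ∧ (p : ℝ × ℝ).1 ∈ Set.Ioc t₀ t
    then spow (p : ℝ × ℝ).2 (-1 / α (Function.leftLim f (p : ℝ × ℝ).1)) else 0

open Topology

/-!
The first claim is additivity of the jump sum over `(t₀, t'] = (t₀, s] ∪ (s, t']`.

For uniqueness, `c ↦ y^⟨-1/α(c)⟩` is Lipschitz with constant `(sup |α'| / a²) · wab a b y`, and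
`wab a b y` is summable over `Λ` because `b < b'`. If two solutions agree on `[s, v)`, they agree
at `v`, since the equation at time `v` only sees left limits. On `[s, u]` the sup `D` of their
difference is then at most `(sup |α'| / a²) · D` times the `wab`-mass of `Λ ∩ (v, u] × ℝ`, and
this mass tends to `0` as `u ↓ v`, so `D = 0` for `u` close to `v`: agreement propagates past `v`.
-/

lemma Real.abs_sign_le_one (r : ℝ) : |Real.sign r| ≤ 1 := by
  rcases Real.sign_apply_eq r with h | h | h <;> simp [h]

lemma abs_spow_le_rpow (y s : ℝ) : |spow y s| ≤ |y| ^ s := by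
  rw [spow, abs_mul, abs_of_nonneg (by positivity : 0 ≤ |y| ^ s)]
  exact mul_le_of_le_one_left (by positivity) (Real.abs_sign_le_one y)

lemma neg_one_div_le_neg_one_div {p q : ℝ} (hp : 0 < p) (hpq : p ≤ q) : -1 / p ≤ -1 / q := by
  rw [neg_div, neg_div, neg_le_neg_iff]
  exact one_div_le_one_div_of_le hp hpq

lemma one_add_log_le_mul_rpow {δ x : ℝ} (hδ : 0 < δ) (hx : 1 ≤ x) :
    1 + Real.log x ≤ (1 + 1 / δ) * x ^ δ := by
  have h1 : 1 ≤ x ^ δ := Real.one_le_rpow hx hδ.le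
  have h2 : Real.log x ≤ x ^ δ / δ := Real.log_le_rpow_div (by linarith) hδ
  calc 1 + Real.log x ≤ x ^ δ + x ^ δ / δ := by linarith
    _ = (1 + 1 / δ) * x ^ δ := by ring

section Weight

variable {a b : ℝ}

lemma wab_nonneg (a b y : ℝ) : 0 ≤ wab a b y :=
  (by positivity : (0 : ℝ) ≤ _).trans (le_max_left _ _)

lemma wab_zero (ha : 0 < a) (hb : 0 < b) : wab a b 0 = 0 := by
  simp [wab, Real.zero_rpow (by positivity : -1 / a ≠ 0),
    Real.zero_rpow (by positivity : -1 / b ≠ 0)]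

lemma rpow_mul_one_add_abs_log_le_wab (ha : 0 < a) {e y : ℝ} (he : e ∈ Icc a b) :
    |y| ^ (-1 / e) * (1 + abs (Real.log |y|)) ≤ wab a b y := by
  have he0 : 0 < e := ha.trans_le he.1
  rcases (abs_nonneg y).eq_or_lt with hy | hy
  · rw [← hy, Real.zero_rpow (by positivity), zero_mul]
    exact wab_nonneg a b y
  rcases le_or_gt |y| 1 with hy1 | hy1
  · exact (mul_le_mul_of_nonneg_right (Real.rpow_le_rpow_of_exponent_ge hy hy1
      (neg_one_div_le_neg_one_div ha he.1)) (by positivity)).trans (le_max_left _ _)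
  · exact (mul_le_mul_of_nonneg_right (Real.rpow_le_rpow_of_exponent_le hy1.le
      (neg_one_div_le_neg_one_div he0 he.2)) (by positivity)).trans (le_max_right _ _)

lemma abs_spow_le_wab (ha : 0 < a) {e y : ℝ} (he : e ∈ Icc a b) :
    |spow y (-1 / e)| ≤ wab a b y :=
  (abs_spow_le_rpow _ _).trans <| (le_mul_of_one_le_right (by positivity)
    (le_add_of_nonneg_right (abs_nonneg _))).trans (rpow_mul_one_add_abs_log_le_wab ha he)

lemma abs_spow_sub_spow_le (ha : 0 < a) {e e' y : ℝ} (he : e ∈ Icc a b) (he' : e' ∈ Icc a b) :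
    |spow y (-1 / e) - spow y (-1 / e')| ≤ wab a b y / a ^ 2 * |e - e'| := by
  have hsub : spow y (-1 / e) - spow y (-1 / e') =
      Real.sign y * (|y| ^ (-1 / e) - |y| ^ (-1 / e')) := by
    simp only [spow]
    ring
  rw [hsub, abs_mul]
  refine (mul_le_of_le_one_left (abs_nonneg _) (Real.abs_sign_le_one y)).trans ?_
  rcases (abs_nonneg y).eq_or_lt with hy | hy
  · have he0 : 0 < e := ha.trans_le he.1
    have he0' : 0 < e' := ha.trans_le he'.1
    rw [← hy, Real.zero_rpow (by positivity), Real.zero_rpow (by positivity), sub_self, abs_zero]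
    exact mul_nonneg (div_nonneg (wab_nonneg a b y) (sq_nonneg a)) (abs_nonneg _)
  have hderiv : ∀ c ∈ Icc a b, HasDerivWithinAt (fun c => |y| ^ (-1 / c))
      (|y| ^ (-1 / c) * Real.log |y| * (1 / c ^ 2)) (Icc a b) c := by
    intro c hc
    have hinv : HasDerivAt (fun c : ℝ => -1 / c) (1 / c ^ 2) c :=
      ((hasDerivAt_const c (-1 : ℝ)).div (hasDerivAt_id c) (ha.trans_le hc.1).ne').congr_deriv
        (by simp)
    exact ((Real.hasStrictDerivAt_const_rpow hy (-1 / c)).hasDerivAt.comp c hinv).hasDerivWithinAt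
  have hbound : ∀ c ∈ Icc a b,
      ‖|y| ^ (-1 / c) * Real.log |y| * (1 / c ^ 2)‖ ≤ wab a b y / a ^ 2 := by
    intro c hc
    have hc0 : 0 < c := ha.trans_le hc.1
    have hac : a ^ 2 ≤ c ^ 2 := pow_le_pow_left₀ ha.le hc.1 2
    rw [Real.norm_eq_abs, abs_mul, abs_mul, abs_of_pos (by positivity : 0 < |y| ^ (-1 / c)),
      abs_of_pos (by positivity : (0 : ℝ) < 1 / c ^ 2), mul_one_div]
    calc |y| ^ (-1 / c) * abs (Real.log |y|) / c ^ 2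
        ≤ |y| ^ (-1 / c) * (1 + abs (Real.log |y|)) / a ^ 2 := by
          gcongr
          linarith
      _ ≤ wab a b y / a ^ 2 := by
          gcongr
          exact rpow_mul_one_add_abs_log_le_wab ha hc
  simpa [Real.norm_eq_abs] using
    (convex_Icc a b).norm_image_sub_le_of_norm_hasDerivWithin_le hderiv hbound he' he

lemma wab_le_mul_rpow_of_one_lt {b' y : ℝ} (ha : 0 < a) (hab : a ≤ b) (hbb' : b < b')
    (hy : 1 < |y|) : wab a b y ≤ (1 + 1 / (1 / b - 1 / b')) * |y| ^ (-1 / b') := by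
  have hδ : 0 < 1 / b - 1 / b' := sub_pos.2 (one_div_lt_one_div_of_lt (ha.trans_le hab) hbb')
  have hlog : abs (Real.log |y|) = Real.log |y| := abs_of_nonneg (Real.log_nonneg hy.le)
  calc wab a b y = |y| ^ (-1 / b) * (1 + Real.log |y|) := by
        rw [wab, hlog, max_eq_right]
        exact mul_le_mul_of_nonneg_right
          (Real.rpow_le_rpow_of_exponent_le hy.le (neg_one_div_le_neg_one_div ha hab))
          (by linarith [Real.log_nonneg hy.le])
    _ ≤ |y| ^ (-1 / b) * ((1 + 1 / (1 / b - 1 / b')) * |y| ^ (1 / b - 1 / b')) := by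
        gcongr
        exact one_add_log_le_mul_rpow hδ hy.le
    _ = (1 + 1 / (1 / b - 1 / b')) * |y| ^ (-1 / b') := by
        rw [mul_left_comm, ← Real.rpow_add (by linarith)]
        congr 2
        ring

lemma summable_wab {ι : Type*} {b' : ℝ} {y : ι → ℝ} (ha : 0 < a) (hab : a ≤ b) (hbb' : b < b')
    (hy : Summable fun i => |y i| ^ (-1 / b')) : Summable fun i => wab a b (y i) := by
  have hb : 0 < b := ha.trans_le hab
  have hδ : 0 < 1 / b - 1 / b' := sub_pos.2 (one_div_lt_one_div_of_lt hb hbb')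
  refine .of_norm_bounded_eventually (hy.mul_left (1 + 1 / (1 / b - 1 / b'))) ?_
  filter_upwards [hy.tendsto_cofinite_zero.eventually_lt_const one_pos] with i hi
  rw [Real.norm_of_nonneg (wab_nonneg _ _ _)]
  rcases eq_or_ne (y i) 0 with h0 | h0
  · rw [h0, wab_zero ha hb]
    positivity
  refine wab_le_mul_rpow_of_one_lt ha hab hbb' (not_le.1 fun h1 => hi.not_ge ?_)
  exact Real.one_le_rpow_of_pos_of_le_one_of_nonpos (abs_pos.2 h0) h1
    (div_nonpos_of_nonpos_of_nonneg (by norm_num) (hb.trans hbb').le)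

lemma abs_spow_comp_sub_le {C : ℝ} {α : ℝ → ℝ} (ha : 0 < a) (hrange : ∀ x, α x ∈ Icc a b)
    (hα : Differentiable ℝ α) (hC : ∀ x, |deriv α x| ≤ C) (y c c' : ℝ) :
    |spow y (-1 / α c) - spow y (-1 / α c')| ≤ C / a ^ 2 * wab a b y * |c - c'| := by
  have hlip : |α c - α c'| ≤ C * |c - c'| := convex_univ.norm_image_sub_le_of_norm_deriv_le
    (fun x _ => hα x) (fun x _ => hC x) trivial trivial
  calc |spow y (-1 / α c) - spow y (-1 / α c')| ≤ wab a b y / a ^ 2 * |α c - α c'| :=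
        abs_spow_sub_spow_le ha (hrange c) (hrange c')
    _ ≤ wab a b y / a ^ 2 * (C * |c - c'|) := by
        gcongr
        exact div_nonneg (wab_nonneg a b y) (sq_nonneg a)
    _ = C / a ^ 2 * wab a b y * |c - c'| := by ring

end Weight

lemma leftLim_eq_of_eqOn_Ioo {f g : ℝ → ℝ} {s x : ℝ} (hsx : s < x)
    (hf : ∃ L, Tendsto f (𝓝[<] x) (𝓝 L)) (h : EqOn g f (Ioo s x)) :
    Function.leftLim g x = Function.leftLim f x := by
  obtain ⟨L, hL⟩ := hf
  have hgf : g =ᶠ[𝓝[<] x] f := eventuallyEq_of_mem (Ioo_mem_nhdsLT hsx) h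
  rw [leftLim_eq_of_tendsto hL, leftLim_eq_of_tendsto (hL.congr' hgf.symm)]

lemma abs_leftLim_sub_le {f g : ℝ → ℝ} {s x B : ℝ} (hsx : s < x)
    (hg : ∃ L, Tendsto g (𝓝[<] x) (𝓝 L)) (hf : ∃ L, Tendsto f (𝓝[<] x) (𝓝 L))
    (hB : ∀ u ∈ Ioo s x, |g u - f u| ≤ B) :
    |Function.leftLim g x - Function.leftLim f x| ≤ B := by
  obtain ⟨Lg, hLg⟩ := hg
  obtain ⟨Lf, hLf⟩ := hf
  rw [leftLim_eq_of_tendsto hLg, leftLim_eq_of_tendsto hLf]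
  exact le_of_tendsto (hLg.sub hLf).abs (eventually_of_mem (Ioo_mem_nhdsLT hsx) hB)

lemma tendsto_tsum_ite_Ioc_nhdsGT {ι : Type*} {w x : ι → ℝ} (hw : Summable w) (hw0 : 0 ≤ w)
    (v : ℝ) :
    Tendsto (fun u => ∑' i, if x i ∈ Ioc v u then w i else 0) (𝓝[>] v) (𝓝 0) := by
  have hbound : ∀ᶠ u in 𝓝[>] v, ∀ i, ‖if x i ∈ Ioc v u then w i else 0‖ ≤ w i :=
    Eventually.of_forall fun u i => by
      split_ifs
      · exact (Real.norm_of_nonneg (hw0 i)).le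
      · simpa using hw0 i
  have hlim : ∀ i, Tendsto (fun u => if x i ∈ Ioc v u then w i else 0) (𝓝[>] v) (𝓝 0) := by
    intro i
    rcases le_or_gt (x i) v with hxv | hvx
    · simp [mem_Ioc, hxv.not_gt]
    · refine tendsto_const_nhds.congr' (eventually_of_mem (Ioo_mem_nhdsGT hvx) fun u hu => ?_)
      simp [mem_Ioc, hu.2.not_ge]
  simpa using tendsto_tsum_of_dominated_convergence hw hlim hbound

lemma forall_mem_Icc_of_forall_Ico {s t : ℝ} {Q : ℝ → Prop}
    (hclosed : ∀ v ∈ Icc s t, (∀ z ∈ Ico s v, Q z) → Q v)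
    (hstep : ∀ v ∈ Ico s t, (∀ z ∈ Icc s v, Q z) → ∃ u > v, ∀ z ∈ Ioo v u, Q z) :
    ∀ z ∈ Icc s t, Q z := by
  by_contra! ⟨z₀, hz₀, hQz₀⟩
  set E := {z ∈ Icc s t | ¬ Q z}
  have hE : E.Nonempty := ⟨z₀, hz₀, hQz₀⟩
  have hbdd : BddBelow E := ⟨s, fun z hz => hz.1.1⟩
  have hsc : s ≤ sInf E := le_csInf hE fun z hz => hz.1.1
  have hct : sInf E ≤ t := (csInf_le hbdd ⟨hz₀, hQz₀⟩).trans hz₀.2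
  have hbelow : ∀ z ∈ Ico s (sInf E), Q z := fun z hz => by_contra fun hQ =>
    hz.2.not_ge (csInf_le hbdd ⟨⟨hz.1, hz.2.le.trans hct⟩, hQ⟩)
  have hQc : Q (sInf E) := hclosed _ ⟨hsc, hct⟩ hbelow
  have hupto : ∀ z ∈ Icc s (sInf E), Q z := fun z hz =>
    hz.2.lt_or_eq.elim (fun h => hbelow z ⟨hz.1, h⟩) (· ▸ hQc)
  rcases hct.lt_or_eq with hct | hct
  · obtain ⟨u, hcu, hu⟩ := hstep _ ⟨hsc, hct⟩ hupto
    obtain ⟨e, he, heu⟩ := exists_lt_of_csInf_lt hE hcu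
    exact (csInf_le hbdd he).lt_or_eq.elim (fun h => he.2 (hu e ⟨h, heu⟩))
      (fun h => he.2 (h ▸ hQc))
  · exact hQz₀ (hupto z₀ ⟨hz₀.1, hct ▸ hz₀.2⟩)

lemma forall_le_zero_of_bound_halves {X : Type*} {φ : X → ℝ} {S : Set X}
    (hbdd : BddAbove (φ '' S)) (hhalf : ∀ D, (∀ z ∈ S, φ z ≤ D) → ∀ z ∈ S, φ z ≤ D / 2) :
    ∀ z ∈ S, φ z ≤ 0 := by
  intro z hz
  have hle : ∀ z ∈ S, φ z ≤ sSup (φ '' S) := fun z hz => le_csSup hbdd (mem_image_of_mem φ hz)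
  have hsup : sSup (φ '' S) ≤ sSup (φ '' S) / 2 :=
    csSup_le ⟨_, mem_image_of_mem φ hz⟩ (forall_mem_image.2 (hhalf _ hle))
  linarith [hle z hz]

noncomputable def jumpTerm (α : ℝ → ℝ) (s t : ℝ) (f : ℝ → ℝ) (p : ℝ × ℝ) : ℝ :=
  if p.1 ∈ Ioc s t then spow p.2 (-1 / α (Function.leftLim f p.1)) else 0

noncomputable def wabMass (a b : ℝ) (Λ : Set (ℝ × ℝ)) (v u : ℝ) : ℝ :=
  ∑' p : Λ, if (p : ℝ × ℝ).1 ∈ Ioc v u then wab a b (p : ℝ × ℝ).2 else 0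

section JumpSum

variable {a b C : ℝ} {α : ℝ → ℝ} {Λ : Set (ℝ × ℝ)}

lemma jumpSum_eq_tsum (s t : ℝ) (f : ℝ → ℝ) :
    jumpSum α Λ s t f = ∑' p : Λ, jumpTerm α s t f p := rfl

lemma abs_jumpTerm_le (ha : 0 < a) (hrange : ∀ x, α x ∈ Icc a b) (s t : ℝ) (f : ℝ → ℝ)
    (p : ℝ × ℝ) : |jumpTerm α s t f p| ≤ wab a b p.2 := by
  unfold jumpTerm
  split_ifs
  · exact abs_spow_le_wab ha (hrange _)
  · simpa using wab_nonneg a b p.2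

lemma jumpTerm_add {r s t : ℝ} (hrs : r ≤ s) (hst : s ≤ t) (f : ℝ → ℝ)
    (p : ℝ × ℝ) : jumpTerm α r t f p = jumpTerm α r s f p + jumpTerm α s t f p := by
  simp only [jumpTerm, mem_Ioc]
  split_ifs <;> grind

lemma summable_jumpTerm (ha : 0 < a) (hrange : ∀ x, α x ∈ Icc a b)
    (hw : Summable fun p : Λ => wab a b (p : ℝ × ℝ).2) (s t : ℝ) (f : ℝ → ℝ) :
    Summable fun p : Λ => jumpTerm α s t f p :=
  .of_norm_bounded hw fun p => abs_jumpTerm_le ha hrange s t f p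

lemma abs_jumpSum_le (ha : 0 < a) (hrange : ∀ x, α x ∈ Icc a b)
    (hw : Summable fun p : Λ => wab a b (p : ℝ × ℝ).2) (s t : ℝ) (f : ℝ → ℝ) :
    |jumpSum α Λ s t f| ≤ ∑' p : Λ, wab a b (p : ℝ × ℝ).2 :=
  tsum_of_norm_bounded (f := fun p : Λ => jumpTerm α s t f p) hw.hasSum
    fun p => abs_jumpTerm_le ha hrange s t f p

lemma jumpSum_add (ha : 0 < a) (hrange : ∀ x, α x ∈ Icc a b)
    (hw : Summable fun p : Λ => wab a b (p : ℝ × ℝ).2) {r s t : ℝ} (hrs : r ≤ s) (hst : s ≤ t)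
    (f : ℝ → ℝ) : jumpSum α Λ r t f = jumpSum α Λ r s f + jumpSum α Λ s t f := by
  simp only [jumpSum_eq_tsum, jumpTerm_add hrs hst]
  exact (summable_jumpTerm ha hrange hw r s f).tsum_add (summable_jumpTerm ha hrange hw s t f)

lemma abs_jumpSum_sub_le (ha : 0 < a) (hrange : ∀ x, α x ∈ Icc a b)
    (hw : Summable fun p : Λ => wab a b (p : ℝ × ℝ).2) (hα : Differentiable ℝ α)
    (hC : ∀ x, |deriv α x| ≤ C) {f g : ℝ → ℝ} {s v z u D : ℝ}
    (hf : ∀ x ∈ Ioc s z, ∃ L, Tendsto f (𝓝[<] x) (𝓝 L))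
    (hg : ∀ x ∈ Ioc s z, ∃ L, Tendsto g (𝓝[<] x) (𝓝 L))
    (heq : EqOn g f (Ico s v)) (hD0 : 0 ≤ D) (hD : ∀ x ∈ Ioo s z, |g x - f x| ≤ D)
    (hzu : z ≤ u) :
    |jumpSum α Λ s z g - jumpSum α Λ s z f| ≤ C / a ^ 2 * D * wabMass a b Λ v u := by
  have hC0 : 0 ≤ C := (abs_nonneg _).trans (hC 0)
  have hw0 : ∀ y, 0 ≤ wab a b y := wab_nonneg a b
  have hW : Summable fun p : Λ => if (p : ℝ × ℝ).1 ∈ Ioc v u then wab a b (p : ℝ × ℝ).2 else 0 :=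
    hw.of_nonneg_of_le (fun p => by split_ifs <;> simp [hw0]) (fun p => by split_ifs <;> simp [hw0])
  have hterm : ∀ p : Λ, ‖jumpTerm α s z g p - jumpTerm α s z f p‖ ≤
      C / a ^ 2 * D * (if (p : ℝ × ℝ).1 ∈ Ioc v u then wab a b (p : ℝ × ℝ).2 else 0) := by
    rintro ⟨⟨x, y⟩, -⟩
    have hrhs : 0 ≤ C / a ^ 2 * D * (if x ∈ Ioc v u then wab a b y else 0) :=
      mul_nonneg (by positivity) (by split_ifs; exacts [hw0 y, le_rfl])
    simp only [jumpTerm, Real.norm_eq_abs]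
    by_cases hx : x ∈ Ioc s z
    · rw [if_pos hx, if_pos hx]
      rcases le_or_gt x v with hxv | hvx
      · rw [leftLim_eq_of_eqOn_Ioo hx.1 (hf x hx)
          (heq.mono (Ioo_subset_Ico_self.trans (Ico_subset_Ico_right hxv))), sub_self, abs_zero]
        exact hrhs
      · rw [if_pos ⟨hvx, hx.2.trans hzu⟩]
        calc _ ≤ C / a ^ 2 * wab a b y * |Function.leftLim g x - Function.leftLim f x| :=
              abs_spow_comp_sub_le ha hrange hα hC y _ _
          _ ≤ C / a ^ 2 * wab a b y * D := by
              gcongr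
              · exact mul_nonneg (by positivity) (hw0 y)
              · exact abs_leftLim_sub_le hx.1 (hg x hx) (hf x hx)
                  fun r hr => hD r ⟨hr.1, hr.2.trans_le hx.2⟩
          _ = _ := by ring
    · rw [if_neg hx, if_neg hx, sub_self, abs_zero]
      exact hrhs
  rw [jumpSum_eq_tsum, jumpSum_eq_tsum, ← (summable_jumpTerm ha hrange hw s z g).tsum_sub
    (summable_jumpTerm ha hrange hw s z f), wabMass, ← tsum_mul_left]
  exact tsum_of_norm_bounded (hW.mul_left _).hasSum hterm

theorem eqOn_of_eq_add_jumpSum (ha : 0 < a) (hrange : ∀ x, α x ∈ Icc a b)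
    (hw : Summable fun p : Λ => wab a b (p : ℝ × ℝ).2) (hα : Differentiable ℝ α)
    (hC : ∀ x, |deriv α x| ≤ C) {f g : ℝ → ℝ} {s t x₀ : ℝ}
    (hf : ∀ t' ∈ Icc s t, f t' = x₀ + jumpSum α Λ s t' f)
    (hg : ∀ t' ∈ Icc s t, g t' = x₀ + jumpSum α Λ s t' g)
    (hfl : ∀ x ∈ Ioc s t, ∃ L, Tendsto f (𝓝[<] x) (𝓝 L))
    (hgl : ∀ x ∈ Ioc s t, ∃ L, Tendsto g (𝓝[<] x) (𝓝 L)) :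
    EqOn g f (Icc s t) := by
  have hdiff : ∀ z ∈ Icc s t, g z - f z = jumpSum α Λ s z g - jumpSum α Λ s z f := by
    intro z hz
    rw [hf z hz, hg z hz]
    ring
  refine forall_mem_Icc_of_forall_Ico (fun v hv heq => ?_) (fun v hv heq => ?_)
  · have h := abs_jumpSum_sub_le (Λ := Λ) ha hrange hw hα hC
      (fun x hx => hfl x ⟨hx.1, hx.2.trans hv.2⟩) (fun x hx => hgl x ⟨hx.1, hx.2.trans hv.2⟩)
      heq le_rfl (fun x hx => by rw [heq x ⟨hx.1.le, hx.2⟩, sub_self, abs_zero]) le_rfl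
    rw [← hdiff v hv, mul_zero, zero_mul] at h
    exact sub_eq_zero.1 (abs_nonpos_iff.1 h)
  have hmass : Tendsto (fun u => C / a ^ 2 * wabMass a b Λ v u) (𝓝[>] v) (𝓝 0) := by
    have := (tendsto_tsum_ite_Ioc_nhdsGT (x := fun p : Λ => (p : ℝ × ℝ).1) hw
      (fun p => wab_nonneg a b _) v).const_mul (C / a ^ 2)
    rwa [mul_zero] at this
  obtain ⟨u, hsmall, hvu, hut⟩ := ((hmass.eventually (gt_mem_nhds one_half_pos)).and
    (Ioc_mem_nhdsGT hv.2)).exists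
  have hbdd : BddAbove ((fun z => |g z - f z|) '' Icc s u) := by
    refine ⟨2 * ∑' p : Λ, wab a b (p : ℝ × ℝ).2, forall_mem_image.2 fun z hz => ?_⟩
    rw [hdiff z ⟨hz.1, hz.2.trans hut⟩]
    linarith [abs_sub (jumpSum α Λ s z g) (jumpSum α Λ s z f),
      abs_jumpSum_le ha hrange hw s z g, abs_jumpSum_le ha hrange hw s z f]
  have hzero := forall_le_zero_of_bound_halves hbdd fun D hD z hz => by
    have hD0 : 0 ≤ D := (abs_nonneg _).trans (hD s ⟨le_rfl, hv.1.trans hvu.le⟩)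
    have hzt : z ≤ t := hz.2.trans hut
    rw [hdiff z ⟨hz.1, hzt⟩]
    calc _ ≤ C / a ^ 2 * D * wabMass a b Λ v u := abs_jumpSum_sub_le ha hrange hw hα hC
          (fun x hx => hfl x ⟨hx.1, hx.2.trans hzt⟩) (fun x hx => hgl x ⟨hx.1, hx.2.trans hzt⟩)
          (fun x hx => heq x (Ico_subset_Icc_self hx)) hD0
          (fun x hx => hD x ⟨hx.1.le, hx.2.le.trans hz.2⟩) hz.2
      _ = D * (C / a ^ 2 * wabMass a b Λ v u) := by ring
      _ ≤ D / 2 := by nlinarith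
  exact ⟨u, hvu, fun z hz =>
    sub_eq_zero.1 (abs_nonpos_iff.1 (hzero z ⟨hv.1.trans hz.1.le, hz.2.le⟩))⟩

end JumpSum

theorem stmt5_general (a b b' t₀ t₁ a₀ : ℝ) (ha : 0 < a) (hab : a < b) (hbb' : b < b')
    (α : ℝ → ℝ) (hrange : ∀ x, α x ∈ Set.Icc a b) (hsmooth : ContDiff ℝ 1 α)
    (hbd : ∃ C, ∀ x, |deriv α x| ≤ C)
    (Λ : Set (ℝ × ℝ))
    (hΛ : Summable fun p : Λ => |(p : ℝ × ℝ).2| ^ (-1 / b'))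
    (f : ℝ → ℝ) (hfc : CadlagOn f t₀ t₁)
    (hf : ∀ t ∈ Set.Ico t₀ t₁, f t = a₀ + jumpSum α Λ t₀ t f)
    (s t : ℝ) (hs : t₀ ≤ s) (ht1 : t < t₁) :
    (∀ t' ∈ Set.Icc s t, f t' = f s + jumpSum α Λ s t' f) ∧
    ∀ g : ℝ → ℝ, CadlagOn g s t →
      (∀ t' ∈ Set.Icc s t, g t' = f s + jumpSum α Λ s t' g) →
      Set.EqOn g f (Set.Icc s t) := by
  obtain ⟨C, hC⟩ := hbd
  have hα : Differentiable ℝ α := hsmooth.differentiable one_ne_zero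
  have hw : Summable fun p : Λ => wab a b (p : ℝ × ℝ).2 := summable_wab ha hab.le hbb' hΛ
  have hfs : ∀ t' ∈ Icc s t, f t' = f s + jumpSum α Λ s t' f := by
    intro t' ht'
    have ht't₁ : t' < t₁ := ht'.2.trans_lt ht1
    linarith [hf t' ⟨hs.trans ht'.1, ht't₁⟩, hf s ⟨hs, ht'.1.trans_lt ht't₁⟩,
      jumpSum_add ha hrange hw hs ht'.1 f]
  refine ⟨hfs, fun g hg hgs => eqOn_of_eq_add_jumpSum ha hrange hw hα hC hfs hgs
    (fun x hx => hfc.2 x ⟨hs.trans_lt hx.1, hx.2.trans ht1.le⟩) hg.2⟩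

/-- f(t) is determined by f(s) and the points of Λ in (s,t]×ℝ: f restricted to [s,t]
is the unique càdlàg solution of the corresponding equation started at f(s). -/
theorem stmt5 (a b b' t₀ t₁ a₀ : ℝ) (ha : 0 < a) (hab : a < b) (hbb' : b < b') (hb1 : b' < 1)
    (ht : t₀ < t₁)
    (α : ℝ → ℝ) (hrange : ∀ x, α x ∈ Set.Icc a b) (hsmooth : ContDiff ℝ 1 α)
    (hbd : ∃ C, ∀ x, |deriv α x| ≤ C)
    (Λ : Set (ℝ × ℝ)) (hcount : Λ.Countable)
    (hsubΛ : Λ ⊆ Set.Ioo t₀ t₁ ×ˢ (Set.univ : Set ℝ))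
    (hΛ : Summable fun p : Λ => |(p : ℝ × ℝ).2| ^ (-1 / b'))
    (f : ℝ → ℝ) (hfc : CadlagOn f t₀ t₁)
    (hf : ∀ t ∈ Set.Ico t₀ t₁, f t = a₀ + jumpSum α Λ t₀ t f)
    (s t : ℝ) (hs : t₀ ≤ s) (hst : s < t) (ht1 : t < t₁) :
    (∀ t' ∈ Set.Icc s t, f t' = f s + jumpSum α Λ s t' f) ∧
    ∀ g : ℝ → ℝ, CadlagOn g s t →
      (∀ t' ∈ Set.Icc s t, g t' = f s + jumpSum α Λ s t' g) →
      Set.EqOn g f (Set.Icc s t) :=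
  stmt5_general a b b' t₀ t₁ a₀ ha hab hbb' α hrange hsmooth hbd Λ hΛ f hfc hf s t hs ht1
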